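/- Let n ≥ 2 and let x be an element of the submonoid of K_n generated by {a_2, …, a_n}, and let w be its canonical form, i.e. the canonical word over {a_2, …, a_n} with φ(w) = x. Let m(x) = min{ i ∈ {0, 1, …, n} : x·(a_i a_{i-1} ⋯ a_1) = f } (where for i = 0 the product a_i ⋯ a_1 is the identity e). Then the word w a_1 a_{m(x)} a_{m(x)-1} ⋯ a_2 is canonical; consequently it is the canonical form of the element x · a_1 · (a_{m(x)} a_{m(x)-1} ⋯ a_2) of K_n. -/
import Mathlib


namespace Kiselman

/-- The defining relations of Kiselman's semigroup on the free monoid over `Fin n`,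
where the index `i : Fin n` represents the generator `a_{i+1}` (so letters are 0-based). -/
def Rel (n : ℕ) : FreeMonoid (Fin n) → FreeMonoid (Fin n) → Prop := fun u v =>
  (∃ i : Fin n, u = .of i * .of i ∧ v = .of i) ∨
  (∃ i j : Fin n, j < i ∧
    ((u = .of i * .of j * .of i ∧ v = .of i * .of j) ∨
     (u = .of j * .of i * .of j ∧ v = .of i * .of j)))

/-- Kiselman's semigroup (monoid) `K n`, presented by the relations `Rel n`. -/
def K (n : ℕ) : Type := (conGen (Rel n)).Quotient

instance (n : ℕ) : Monoid (K n) := inferInstanceAs (Monoid (conGen (Rel n)).Quotient)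

/-- The canonical epimorphism `φ` from the free monoid onto `K n`. -/
def phi (n : ℕ) : FreeMonoid (Fin n) →* K n := Con.mk' _

/-- `φ` applied to a word given as a list of (0-based) letters. -/
def phiL (n : ℕ) (w : List (Fin n)) : K n := phi n (FreeMonoid.ofList w)

/-- The generator `a_{i+1}` of `K n` (`i` is the 0-based index). -/
def gen {n : ℕ} (i : Fin n) : K n := phi n (FreeMonoid.of i)

/-- The word `a_hi a_{hi-1} ⋯ a_lo` (letters named 1-based), as a list of 0-based indices:
`[hi-1, hi-2, …, lo-1]` (capped at `n`). -/
def descList (n lo hi : ℕ) : List (Fin n) :=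
  ((List.finRange n).filter (fun k => decide (lo ≤ k.val + 1 ∧ k.val + 1 ≤ hi))).reverse

/-- The zero element `f = a_n a_{n-1} ⋯ a_2 a_1` of `K n`. -/
def fEl (n : ℕ) : K n := phiL n (descList n 1 n)

/-- A word `w` is canonical if for every factorization `w = p ++ [i] ++ u ++ [i] ++ q`
there are letters `j > i` and `k < i` occurring in `u`. -/
def Canonical {n : ℕ} (w : List (Fin n)) : Prop :=
  ∀ (p u q : List (Fin n)) (i : Fin n),
    w = p ++ [i] ++ u ++ [i] ++ q →
    (∃ j ∈ u, i < j) ∧ (∃ k ∈ u, k < i)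

/-- The submonoid of `K n` generated by `{a_2, a_3, …, a_n}`. -/
def upper (n : ℕ) : Submonoid (K n) := Submonoid.closure (gen '' {i : Fin n | i.val ≠ 0})

/-- The submonoid of `K n` generated by `{a_1, a_2, …, a_{n-1}}`. -/
def lower (n : ℕ) : Submonoid (K n) := Submonoid.closure (gen '' {i : Fin n | i.val + 1 ≠ n})

/-- `m(x) = min { i ∈ {0,…,n} : x ⬝ (a_i a_{i-1} ⋯ a_1) = f }`. -/
noncomputable def mIdx {n : ℕ} (x : K n) : ℕ :=
  sInf {i : ℕ | x * phiL n (descList n 1 i) = fEl n}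


/-! ### Auxiliary lemmas -/

lemma phiL_append (n : ℕ) (s t : List (Fin n)) : phiL n (s ++ t) = phiL n s * phiL n t := by
  simp [phiL, FreeMonoid.ofList_append]

lemma phiL_cons (n : ℕ) (a : Fin n) (s : List (Fin n)) :
    phiL n (a :: s) = gen a * phiL n s := by
  simp [phiL, gen, FreeMonoid.ofList_cons]

lemma phiL_nil (n : ℕ) : phiL n ([] : List (Fin n)) = 1 := by
  simp [phiL, FreeMonoid.ofList_nil]

lemma gen_idem {n : ℕ} (i : Fin n) : gen i * gen i = gen i := by
  have : phi n (.of i * .of i) = phi n (.of i) :=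
    (Con.eq _).mpr (ConGen.Rel.of _ _ (Or.inl ⟨i, rfl, rfl⟩))
  simpa [gen, map_mul] using this

lemma rel2 {n : ℕ} {i j : Fin n} (h : j < i) : gen i * gen j * gen i = gen i * gen j := by
  have : phi n (.of i * .of j * .of i) = phi n (.of i * .of j) :=
    (Con.eq _).mpr (ConGen.Rel.of _ _ (Or.inr ⟨i, j, h, Or.inl ⟨rfl, rfl⟩⟩))
  simpa [gen, map_mul] using this

lemma sandwich {n : ℕ} (i : Fin n) (s : List (Fin n)) (h : ∀ k ∈ s, k < i) :
    gen i * phiL n s * gen i = gen i * phiL n s := by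
  induction s with
  | nil => simp [phiL_nil, gen_idem]
  | cons a t ih =>
    have ha : a < i := h a (by simp)
    have ih' := ih (fun k hk => h k (by simp [hk]))
    have h1 : gen i * gen a = gen i * gen a * gen i := (rel2 ha).symm
    rw [phiL_cons, ← mul_assoc]
    conv_lhs => rw [h1]
    rw [mul_assoc (gen i * gen a), mul_assoc (gen i * gen a), ih', ← mul_assoc, rel2 ha]

lemma filter_split {n : ℕ} (t : Fin n) (P Q : Fin n → Bool)
    (h1 : ∀ k, Q k = true ↔ (P k = true ∨ k = t)) (h2 : ∀ k, P k = true → k < t) :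
    ∀ l : List (Fin n), l.Pairwise (· < ·) → t ∈ l → l.filter Q = l.filter P ++ [t] := by
  intro l
  induction l with
  | nil => intro _ h; simp at h
  | cons a l' ih =>
    intro hp ht
    have ha : ∀ b ∈ l', a < b := fun b hb => List.rel_of_pairwise_cons hp hb
    have hp' : l'.Pairwise (· < ·) := hp.of_cons
    rcases List.mem_cons.mp ht with h | ht'
    · subst h
      have hPa : P t = false := by
        by_contra h
        exact absurd (h2 t (by simpa using h)) (lt_irrefl t)
      have hQa : Q t = true := (h1 t).mpr (Or.inr rfl)
      have hQl : l'.filter Q = [] := by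
        apply List.filter_eq_nil_iff.mpr
        intro k hk hQk
        rcases (h1 k).mp hQk with hP | rfl
        · exact absurd (h2 k hP) (asymm (ha k hk))
        · exact absurd (ha k hk) (lt_irrefl k)
      have hPl : l'.filter P = [] := by
        apply List.filter_eq_nil_iff.mpr
        intro k hk hPk
        exact absurd (h2 k hPk) (asymm (ha k hk))
      simp [List.filter_cons, hPa, hQa, hQl, hPl]
    · have hat : a < t := ha t ht'
      have hQP : Q a = P a := by
        rcases hb : P a with _ | _
        · rcases hq : Q a with _ | _
          · rfl
          · rcases (h1 a).mp hq with hP | rfl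
            · rw [hb] at hP; exact absurd hP (by simp)
            · exact absurd hat (lt_irrefl a)
        · exact (h1 a).mpr (Or.inl hb)
      rw [List.filter_cons, List.filter_cons, hQP]
      rcases hb : P a with _ | _
      · simpa using ih hp' ht'
      · simpa using ih hp' ht'

lemma descList_cons {n lo hi : ℕ} (hlo : 1 ≤ lo) (hlh : lo ≤ hi) (hhn : hi ≤ n) :
    descList n lo hi = (⟨hi - 1, by omega⟩ : Fin n) :: descList n lo (hi - 1) := by
  unfold descList
  rw [filter_split (⟨hi - 1, by omega⟩ : Fin n)
      (fun k => decide (lo ≤ k.val + 1 ∧ k.val + 1 ≤ hi - 1))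
      (fun k => decide (lo ≤ k.val + 1 ∧ k.val + 1 ≤ hi))
      ?_ ?_ _ (List.pairwise_lt_finRange n) (List.mem_finRange _)]
  · simp
  · intro k
    simp only [decide_eq_true_eq, Fin.ext_iff]
    constructor
    · rintro ⟨h1, h2⟩
      rcases Nat.lt_or_ge (k.val + 1) hi with h | h
      · exact Or.inl ⟨h1, by omega⟩
      · exact Or.inr (by omega)
    · rintro (⟨h1, h2⟩ | h)
      · exact ⟨h1, by omega⟩
      · simp only [h]; omega
  · intro k hk
    simp only [decide_eq_true_eq] at hk
    simp only [Fin.lt_def]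
    omega

lemma mem_descList {n lo hi : ℕ} {k : Fin n} :
    k ∈ descList n lo hi ↔ lo ≤ k.val + 1 ∧ k.val + 1 ≤ hi := by
  simp [descList, List.mem_filter]

lemma pairwise_descList (n lo hi : ℕ) :
    (descList n lo hi).Pairwise (fun a b => b < a) := by
  rw [descList, List.pairwise_reverse]
  exact List.Pairwise.filter _ (List.pairwise_lt_finRange n)

lemma nodup_descList (n lo hi : ℕ) : (descList n lo hi).Nodup := by
  rw [descList, List.nodup_reverse]
  exact (List.nodup_finRange n).filter _

lemma descList_stable {n m : ℕ} (h : n ≤ m) : descList n 1 m = descList n 1 n := by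
  unfold descList
  congr 1
  apply List.filter_congr
  intro k _
  have := k.isLt
  have h1 : (1 ≤ k.val + 1 ∧ k.val + 1 ≤ m) := ⟨by omega, by omega⟩
  have h2 : (1 ≤ k.val + 1 ∧ k.val + 1 ≤ n) := ⟨by omega, by omega⟩
  simp [h1, h2]

lemma exists_last_split {α : Type*} {a : α} :
    ∀ {l : List α}, a ∈ l → ∃ l₁ l₂, l = l₁ ++ a :: l₂ ∧ a ∉ l₂ := by
  intro l
  induction l with
  | nil => intro h; simp at h
  | cons b l' ih =>
    intro h
    by_cases hm : a ∈ l'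
    · obtain ⟨l₁, l₂, rfl, hnot⟩ := ih hm
      exact ⟨b :: l₁, l₂, rfl, hnot⟩
    · rcases List.mem_cons.mp h with rfl | h'
      · exact ⟨[], l', rfl, hm⟩
      · exact absurd h' hm

lemma exists_gt_in_suffix {n : ℕ} (x : K n) (w p c' : List (Fin n)) (i : Fin n)
    (hw : w = p ++ i :: c') (hphi : phiL n w = x)
    (hm2 : 2 ≤ mIdx x) (hmn : mIdx x ≤ n) (hi : i.val = mIdx x - 1)
    (hS : x * phiL n (descList n 1 (mIdx x)) = fEl n) :
    ∃ j ∈ c', i < j := by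
  by_contra hcon
  push_neg at hcon
  obtain ⟨p₂, s₂, hw₂, hs₂⟩ : ∃ p₂ s₂, w = p₂ ++ i :: s₂ ∧ ∀ j ∈ s₂, j < i := by
    by_cases hmem : i ∈ c'
    · obtain ⟨l₁, l₂, hc, hnot⟩ := exists_last_split hmem
      refine ⟨p ++ i :: l₁, l₂, by simp [hw, hc], ?_⟩
      intro j hj
      have hjc : j ∈ c' := by rw [hc]; simp [hj]
      have hne : j ≠ i := fun h => hnot (h ▸ hj)
      exact lt_of_le_of_ne (hcon j hjc) hne
    · exact ⟨p, c', hw, fun j hj =>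
        lt_of_le_of_ne (hcon j hj) (fun h => hmem (h ▸ hj))⟩
  have hdesc : descList n 1 (mIdx x) = i :: descList n 1 (mIdx x - 1) := by
    rw [descList_cons (le_refl 1) (by omega) hmn]
    congr 1
    exact Fin.ext hi.symm
  have hxw : x = phiL n p₂ * (gen i * phiL n s₂) := by
    rw [← hphi, hw₂, phiL_append, phiL_cons]
  have key := sandwich i s₂ hs₂
  have hstep : x * phiL n (descList n 1 (mIdx x)) =
      x * phiL n (descList n 1 (mIdx x - 1)) := by
    rw [hdesc, phiL_cons, hxw]
    rw [mul_assoc (phiL n p₂), mul_assoc (phiL n p₂)]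
    congr 1
    rw [← mul_assoc, ← mul_assoc, key]
  have hx1 : x * phiL n (descList n 1 (mIdx x - 1)) = fEl n := hstep ▸ hS
  have hle : mIdx x ≤ mIdx x - 1 := Nat.sInf_le
    (show mIdx x - 1 ∈ {k : ℕ | x * phiL n (descList n 1 k) = fEl n} from hx1)
  omega

/-- If `x` lies in the submonoid generated by `a_2, …, a_n` with canonical form `w`,
then the word `w a_1 a_{m(x)} a_{m(x)-1} ⋯ a_2` is canonical; consequently it is the
canonical form of `x ⬝ a_1 ⬝ (a_{m(x)} ⋯ a_2)`. -/
theorem canonical_form_of_solution (n : ℕ) (hn : 2 ≤ n) (x : K n) (w : List (Fin n))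
    (hx : x ∈ upper n)
    (hw0 : ∀ i ∈ w, i.val ≠ 0) (hwc : Canonical w) (hphi : phiL n w = x) :
    Canonical (w ++ (⟨0, by omega⟩ : Fin n) :: descList n 2 (mIdx x)) ∧
    phiL n (w ++ (⟨0, by omega⟩ : Fin n) :: descList n 2 (mIdx x)) =
      x * gen ⟨0, by omega⟩ * phiL n (descList n 2 (mIdx x)) := by
  set z : Fin n := ⟨0, by omega⟩ with hz
  set D : List (Fin n) := descList n 2 (mIdx x) with hDdef
  constructor
  · intro p u q i hEq
    have hEq' : w ++ (z :: D) = p ++ ([i] ++ (u ++ ([i] ++ q))) := by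
      simpa [List.append_assoc] using hEq
    rcases List.append_eq_append_iff.mp hEq' with ⟨a, hpa, hTa⟩ | ⟨c, hwc', hRc⟩
    · -- both occurrences inside `z :: D` : impossible since it has no duplicates
      have hnd : (z :: D).Nodup := by
        refine List.nodup_cons.mpr ⟨fun hmem => ?_, nodup_descList n 2 _⟩
        have := mem_descList.mp hmem
        have hzv : z.val = 0 := rfl
        omega
      rw [hTa] at hnd
      simp [List.nodup_append] at hnd
    · cases c with
      | nil =>
        have hiz : i = z ∧ u ++ ([i] ++ q) = D := by
          simpa using hRc
        have hiD : i ∈ D := by rw [← hiz.2]; simp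
        have hmem := mem_descList.mp (hDdef ▸ hiD)
        have hv : i.val = 0 := by rw [hiz.1]
        omega
      | cons i' c' =>
        have hii : i' = i ∧ u ++ ([i] ++ q) = c' ++ (z :: D) := by
          have := hRc
          simp only [List.cons_append, List.singleton_append, List.cons.injEq] at this
          exact ⟨this.1.symm, this.2⟩
        obtain ⟨h5, hu⟩ := hii
        rw [h5] at hwc'
        have hiw : i ∈ w := by rw [hwc']; simp
        have hi0 : i.val ≠ 0 := hw0 i hiw
        rcases List.append_eq_append_iff.mp hu with ⟨a, hca, hia⟩ | ⟨d, hud, hTd⟩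
        · -- second occurrence also in w : use canonicity of w
          cases a with
          | nil =>
            simp only [List.append_nil, List.nil_append] at hia
            have : i = z := by
              have := hia; simp at this; exact this.1
            exact absurd (congrArg Fin.val this) (by simp [hz, hi0])
          | cons i'' a' =>
            have h3 : i'' = i ∧ q = a' ++ (z :: D) := by
              have := hia
              simp only [List.cons_append, List.singleton_append, List.cons.injEq] at this
              exact ⟨this.1.symm, this.2⟩
            obtain ⟨h6, hq⟩ := h3
            rw [h6] at hca
            exact hwc p u a' i (by simp [hwc', hca, List.append_assoc])
        · -- second occurrence in the descending tail
          cases d with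
          | nil =>
            simp only [List.nil_append] at hTd
            have : z = i := by
              have := hTd; simp at this; exact this.1
            exact absurd (congrArg Fin.val this.symm) (by simp [hz, hi0])
          | cons z' d' =>
            have h4 : z = z' ∧ D = d' ++ ([i] ++ q) := by
              have := hTd
              simp only [List.cons_append, List.cons.injEq] at this
              exact ⟨this.1, this.2⟩
            obtain ⟨hzz, hDd⟩ := h4
            have hiD : i ∈ D := by rw [hDd]; simp
            have hmemD := mem_descList.mp (hDdef ▸ hiD)
            have hpw := pairwise_descList n 2 (mIdx x)
            rw [← hDdef, hDd] at hpw
            have hpw' := List.pairwise_append.mp hpw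
            have hzu : z ∈ u := by rw [hud, ← hzz]; simp
            have hzi : z < i := by
              have hzv : z.val = 0 := rfl
              rw [Fin.lt_def]
              omega
            refine ⟨?_, ⟨z, hzu, hzi⟩⟩
            cases d' with
            | cons j0 d'' =>
              have hij : i < j0 := hpw'.2.2 j0 (by simp) i (by simp)
              exact ⟨j0, by rw [hud]; simp, hij⟩
            | nil =>
              -- i is the top letter a_{m}: use minimality of mIdx x
              have hm2 : 2 ≤ mIdx x := by omega
              have hSne : {k : ℕ | x * phiL n (descList n 1 k) = fEl n}.Nonempty := by
                by_contra hemp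
                have : mIdx x = 0 := by
                  rw [mIdx, Set.not_nonempty_iff_eq_empty.mp hemp, Nat.sInf_empty]
                omega
              have hSm : x * phiL n (descList n 1 (mIdx x)) = fEl n := Nat.sInf_mem hSne
              have hmn : mIdx x ≤ n := by
                by_contra hgt
                have hnm : n ≤ mIdx x := by omega
                have : x * phiL n (descList n 1 n) = fEl n := by
                  rw [← descList_stable hnm]; exact hSm
                have hle : mIdx x ≤ n := Nat.sInf_le
                  (show n ∈ {k : ℕ | x * phiL n (descList n 1 k) = fEl n} from this)
                omega
              have hival : i.val = mIdx x - 1 := by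
                set t : Fin n := ⟨mIdx x - 1, by omega⟩ with htdef
                have hv : t.val = mIdx x - 1 := rfl
                have htop : t ∈ D := mem_descList.mpr ⟨by omega, by omega⟩
                rw [hDd, List.nil_append] at htop
                rcases List.mem_cons.mp (by simpa using htop) with heq | hq
                · exact heq ▸ hv
                · have hpw2 : (i :: q).Pairwise (fun a b => b < a) := by
                    simpa using hpw
                  have hti : t < i := List.rel_of_pairwise_cons hpw2 hq
                  rw [Fin.lt_def, hv] at hti
                  omega
              obtain ⟨j, hjc, hij⟩ :=
                exists_gt_in_suffix x w p c' i hwc' hphi hm2 hmn hival hSm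
              exact ⟨j, by rw [hud]; simp [hjc], hij⟩
  · rw [phiL_append, phiL_cons, hphi, ← mul_assoc]

end Kiselman
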